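/- arXiv:1303.3155 — 6 statements merged into one kernel-verified Lean document; each statement's English description precedes it below -/
import Mathlib

section
/- Let (R, <) be a dense linear order without endpoints with the order topology. Let X ⊆ R^n, X̄ = cl(X), and let f, g : X̄ → R be continuous functions with f(x) < g(x) for all x ∈ X̄. Then the closure of the open cylinder C = {(x, y) ∈ X × R : f(x) < y < g(x)} equals the closed cylinder {(x, y) ∈ X̄ × R : f(x) ≤ y ≤ g(x)}. -/
open Topology Filter


/-- closure of the open cylinder `(f,g)_X` equals the closed cylinder
`[f,g]_{cl(X)}`, for `f, g` continuous on `cl(X)` with `f < g`. -/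
theorem stmt_1 {R : Type*} [LinearOrder R] [DenselyOrdered R] [NoMinOrder R] [NoMaxOrder R]
    [TopologicalSpace R] [OrderTopology R] {n : ℕ}
    (X : Set (Fin n → R)) (f g : (Fin n → R) → R)
    (hf : ContinuousOn f (closure X)) (hg : ContinuousOn g (closure X))
    (hfg : ∀ x ∈ closure X, f x < g x) :
    closure {p : (Fin n → R) × R | p.1 ∈ X ∧ f p.1 < p.2 ∧ p.2 < g p.1}
      = {p : (Fin n → R) × R | p.1 ∈ closure X ∧ f p.1 ≤ p.2 ∧ p.2 ≤ g p.1} := by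
  set C : Set ((Fin n → R) × R) := {p | p.1 ∈ X ∧ f p.1 < p.2 ∧ p.2 < g p.1} with hC
  apply Set.Subset.antisymm
  · intro p hp
    have h1 : p.1 ∈ closure X :=
      map_mem_closure continuous_fst hp (fun q hq => hq.1)
    have hne : (𝓝[C] p).NeBot := mem_closure_iff_nhdsWithin_neBot.mp hp
    have hfst : Filter.Tendsto Prod.fst (𝓝[C] p) (𝓝[closure X] p.1) := by
      apply tendsto_nhdsWithin_of_tendsto_nhds_of_eventually_within
      · exact continuous_fst.continuousAt.mono_left nhdsWithin_le_nhds
      · filter_upwards [self_mem_nhdsWithin] with q hq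
        exact subset_closure hq.1
    have htf : Filter.Tendsto (fun q : (Fin n → R) × R => f q.1) (𝓝[C] p) (𝓝 (f p.1)) :=
      Filter.Tendsto.comp (hf.continuousWithinAt h1) hfst
    have htg : Filter.Tendsto (fun q : (Fin n → R) × R => g q.1) (𝓝[C] p) (𝓝 (g p.1)) :=
      Filter.Tendsto.comp (hg.continuousWithinAt h1) hfst
    have hsnd : Filter.Tendsto Prod.snd (𝓝[C] p) (𝓝 p.2) :=
      continuous_snd.continuousAt.mono_left nhdsWithin_le_nhds
    refine ⟨h1, ?_, ?_⟩
    · refine le_of_tendsto_of_tendsto htf hsnd ?_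
      filter_upwards [self_mem_nhdsWithin] with q hq
      exact le_of_lt hq.2.1
    · refine le_of_tendsto_of_tendsto hsnd htg ?_
      filter_upwards [self_mem_nhdsWithin] with q hq
      exact le_of_lt hq.2.2
  · rintro ⟨x, y⟩ ⟨hx, hfy, hyg⟩
    rw [mem_closure_iff_nhds]
    intro t ht
    rw [nhds_prod_eq] at ht
    obtain ⟨U, hU, V, hV, hUV⟩ := Filter.mem_prod_iff.mp ht
    have hIoo : y ∈ closure (Set.Ioo (f x) (g x)) := by
      rw [closure_Ioo (ne_of_lt (hfg x hx))]
      exact ⟨hfy, hyg⟩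
    obtain ⟨y', hy'V, hy'⟩ := mem_closure_iff_nhds.mp hIoo V hV
    have hneX : (𝓝[X] x).NeBot := mem_closure_iff_nhdsWithin_neBot.mp hx
    have hmono : 𝓝[X] x ≤ 𝓝[closure X] x := nhdsWithin_mono x subset_closure
    have hflt : ∀ᶠ x' in 𝓝[X] x, f x' < y' :=
      ((hf.continuousWithinAt hx).eventually_lt_const hy'.1).filter_mono hmono
    have hglt : ∀ᶠ x' in 𝓝[X] x, y' < g x' :=
      ((hg.continuousWithinAt hx).eventually_const_lt hy'.2).filter_mono hmono
    have hUmem : ∀ᶠ x' in 𝓝[X] x, x' ∈ U :=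
      Filter.eventually_of_mem (nhdsWithin_le_nhds hU) (fun _ h => h)
    have hXmem : ∀ᶠ x' in 𝓝[X] x, x' ∈ X := self_mem_nhdsWithin
    obtain ⟨x', hx'U, hx'X, hx'f, hx'g⟩ := (hUmem.and (hXmem.and (hflt.and hglt))).exists
    exact ⟨(x', y'), hUV ⟨hx'U, hy'V⟩, hx'X, hx'f, hx'g⟩
end

section
/- Let (R, <) be a dense linear order without endpoints with the order topology, X ⊆ R^n, f, g : cl(X) → R continuous with f < g on cl(X), and C = {(x,y) ∈ X × R : f(x) < y < g(x)}. Then the projection of cl(C) to R^n equals cl(X), i.e., π(cl(C)) = cl(π(C)). -/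
open Topology Filter Set


/-- for the open cylinder `C = (f,g)_X`, the projection of `cl(C)` to `R^n`
equals the closure of the projection of `C`. -/
theorem stmt_2 {R : Type*} [LinearOrder R] [DenselyOrdered R] [NoMinOrder R] [NoMaxOrder R]
    [TopologicalSpace R] [OrderTopology R] {n : ℕ}
    (X : Set (Fin n → R)) (f g : (Fin n → R) → R)
    (hf : ContinuousOn f (closure X)) (hg : ContinuousOn g (closure X))
    (hfg : ∀ x ∈ closure X, f x < g x) :
    Prod.fst '' closure {p : (Fin n → R) × R | p.1 ∈ X ∧ f p.1 < p.2 ∧ p.2 < g p.1}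
      = closure (Prod.fst '' {p : (Fin n → R) × R | p.1 ∈ X ∧ f p.1 < p.2 ∧ p.2 < g p.1}) := by
  set C : Set ((Fin n → R) × R) := {p | p.1 ∈ X ∧ f p.1 < p.2 ∧ p.2 < g p.1} with hC
  have himg : Prod.fst '' C = X := by
    apply Set.Subset.antisymm
    · rintro _ ⟨p, hp, rfl⟩; exact hp.1
    · intro x hx
      obtain ⟨y, hy1, hy2⟩ := exists_between (hfg x (subset_closure hx))
      exact ⟨(x, y), ⟨hx, hy1, hy2⟩, rfl⟩
  rw [himg]
  apply Set.Subset.antisymm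
  · have := image_closure_subset_closure_image (s := C)
      (f := Prod.fst) continuous_fst
    rwa [himg] at this
  · intro x hx
    obtain ⟨y, hy1, hy2⟩ := exists_between (hfg x hx)
    refine ⟨(x, y), ?_, rfl⟩
    have hne : (𝓝[X] x).NeBot := mem_closure_iff_nhdsWithin_neBot.mp hx
    have h1 : ∀ᶠ z in 𝓝[closure X] x, f z < y :=
      (hf x hx).eventually_lt tendsto_const_nhds hy1
    have h2 : ∀ᶠ z in 𝓝[closure X] x, y < g z :=
      Filter.Tendsto.eventually_lt tendsto_const_nhds (hg x hx) hy2
    have hmono : 𝓝[X] x ≤ 𝓝[closure X] x := nhdsWithin_mono x subset_closure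
    have hev : ∀ᶠ z in 𝓝[X] x, (z, y) ∈ C := by
      filter_upwards [self_mem_nhdsWithin, h1.filter_mono hmono, h2.filter_mono hmono]
        with z hz h1z h2z
      exact ⟨hz, h1z, h2z⟩
    have htend : Filter.Tendsto (fun z => (z, y)) (𝓝[X] x) (𝓝 (x, y)) := by
      rw [nhds_prod_eq]
      exact (tendsto_id.mono_left nhdsWithin_le_nhds).prodMk tendsto_const_nhds
    exact mem_closure_of_tendsto htend hev
end

section
/- Let R be a linearly ordered abelian group with the order topology, V ⊆ R^n an open subset, and suppose for each x ∈ V we have a strictly decreasing bijection θ_x : [a_x, b_x] → [c_x, d_x] with θ_x(a_x) = d_x and θ_x(b_x) = c_x. Assume a, b, c, d : V → R are continuous, and the map (x, y) ↦ θ_x(y) on {(x,y) : x ∈ V, y ∈ [a_x, b_x]} is continuous. Then the map γ : {(x, z) : x ∈ V, z ∈ [c_x, d_x]} → R defined by γ(x, z) = θ_x^{-1}(z) is continuous. -/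
/-!
Extend each `θ x` beyond `[a x, b x]` with slope `-1`. The extensions are strictly decreasing on
all of `R` and still continuous in `x` at every fixed point `y`. For a family of strictly decreasing
functions `T x`, a fiberwise inverse `g` is continuous as soon as every `x ↦ T x y` is: if
`u < g p₀ < v`, then `T x v < z < T x u` holds at `p₀ = (x₀, z₀)`, hence near `p₀`, and it forces
`u < g (x, z) < v`.
-/

open Set Filter Topology

section Inverse

variable {X R : Type*} [TopologicalSpace X] [LinearOrder R] [TopologicalSpace R] [OrderTopology R]

theorem continuousOn_of_strictAnti_of_apply_eq {T : X → R → R} {V : Set X} {S : Set (X × R)}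
    {g : X × R → R} (hT : ∀ y, ContinuousOn (fun x => T x y) V)
    (hanti : ∀ x ∈ V, StrictAnti (T x)) (hS : ∀ p ∈ S, p.1 ∈ V ∧ T p.1 (g p) = p.2) :
    ContinuousOn g S := by
  intro p₀ hp₀
  have hTS (y : R) : ContinuousWithinAt (fun p : X × R => T p.1 y) S p₀ :=
    (hT y p₀.1 (hS p₀ hp₀).1).comp continuousWithinAt_fst fun p hp => (hS p hp).1
  have hg₀ := (hS p₀ hp₀).2
  refine tendsto_order.2 ⟨fun u hu => ?_, fun v hv => ?_⟩
  · have hlt : p₀.2 < T p₀.1 u := hg₀ ▸ hanti _ (hS p₀ hp₀).1 hu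
    filter_upwards [continuousWithinAt_snd.eventually_lt (hTS u) hlt, self_mem_nhdsWithin]
      with p hp hpS
    rw [← (hS p hpS).2] at hp
    exact (hanti _ (hS p hpS).1).lt_iff_gt.1 hp
  · have hlt : T p₀.1 v < p₀.2 := hg₀ ▸ hanti _ (hS p₀ hp₀).1 hv
    filter_upwards [(hTS v).eventually_lt continuousWithinAt_snd hlt, self_mem_nhdsWithin]
      with p hp hpS
    rw [← (hS p hpS).2] at hp
    exact (hanti _ (hS p hpS).1).lt_iff_gt.1 hp

end Inverse

theorem max_min_mem_Icc {R : Type*} [LinearOrder R] {a b : R} (hab : a ≤ b) (y : R) :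
    max a (min b y) ∈ Icc a b :=
  ⟨le_max_left _ _, max_le hab (min_le_left _ _)⟩

section SlopeExtend

variable {R : Type*} [AddCommGroup R] [LinearOrder R]

/-- The paper's `θ̄`: `θ` on `[a, b]`, continued with slope `-1` on either side. -/
def slopeExtend (a b : R) (θ : R → R) (y : R) : R :=
  θ (max a (min b y)) + (max a (min b y) - y)

theorem slopeExtend_of_mem {a b y : R} (θ : R → R) (hy : y ∈ Icc a b) :
    slopeExtend a b θ y = θ y := by
  simp [slopeExtend, min_eq_right hy.2, max_eq_right hy.1]

variable [IsOrderedAddMonoid R]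

theorem antitone_max_min_sub (a b : R) : Antitone fun y => max a (min b y) - y := by
  intro y₁ y₂ h
  grind

theorem slopeExtend_strictAnti {a b : R} {θ : R → R} (hab : a ≤ b)
    (hθ : StrictAntiOn θ (Icc a b)) : StrictAnti (slopeExtend a b θ) := by
  intro y₁ y₂ h
  have hmono : max a (min b y₁) ≤ max a (min b y₂) :=
    max_le_max le_rfl (min_le_min le_rfl h.le)
  rcases hmono.eq_or_lt with heq | hlt
  · simp only [slopeExtend, heq]
    exact add_lt_add_right (sub_lt_sub_left h _) _
  · have hθlt := hθ (max_min_mem_Icc hab y₁) (max_min_mem_Icc hab y₂) hlt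
    exact add_lt_add_of_lt_of_le hθlt (antitone_max_min_sub a b h.le)

variable [TopologicalSpace R] [OrderTopology R]

theorem continuousOn_slopeExtend_apply {X : Type*} [TopologicalSpace X] {V : Set X}
    {a b : X → R} {θ : X → R → R} (ha : ContinuousOn a V) (hb : ContinuousOn b V)
    (hab : ∀ x ∈ V, a x ≤ b x)
    (hθ : ContinuousOn (fun p : X × R => θ p.1 p.2) {p | p.1 ∈ V ∧ p.2 ∈ Icc (a p.1) (b p.1)})
    (y : R) : ContinuousOn (fun x => slopeExtend (a x) (b x) (θ x) y) V := by
  have hclamp : ContinuousOn (fun x => max (a x) (min (b x) y)) V :=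
    ha.sup (hb.inf continuousOn_const)
  have hθclamp : ContinuousOn (fun x => θ x (max (a x) (min (b x) y))) V :=
    hθ.comp (continuousOn_id.prodMk hclamp) fun x hx => ⟨hx, max_min_mem_Icc (hab x hx) y⟩
  exact hθclamp.add (hclamp.sub continuousOn_const)

end SlopeExtend

theorem stmt_4_general {R : Type*} [AddCommGroup R] [LinearOrder R] [IsOrderedAddMonoid R]
    [TopologicalSpace R] [OrderTopology R] {n : ℕ}
    (V : Set (Fin n → R))
    (a b c d : (Fin n → R) → R)
    (ha : ContinuousOn a V) (hb : ContinuousOn b V)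
    (hab : ∀ x ∈ V, a x ≤ b x)
    (θ γ : (Fin n → R) → R → R)
    (hanti : ∀ x ∈ V, StrictAntiOn (θ x) (Set.Icc (a x) (b x)))
    (hθcont : ContinuousOn (fun p : (Fin n → R) × R => θ p.1 p.2)
      {p : (Fin n → R) × R | p.1 ∈ V ∧ p.2 ∈ Set.Icc (a p.1) (b p.1)})
    (hγ : ∀ x ∈ V, ∀ z ∈ Set.Icc (c x) (d x),
      γ x z ∈ Set.Icc (a x) (b x) ∧ θ x (γ x z) = z) :
    ContinuousOn (fun p : (Fin n → R) × R => γ p.1 p.2)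
      {p : (Fin n → R) × R | p.1 ∈ V ∧ p.2 ∈ Set.Icc (c p.1) (d p.1)} := by
  refine continuousOn_of_strictAnti_of_apply_eq (T := fun x => slopeExtend (a x) (b x) (θ x))
    (continuousOn_slopeExtend_apply ha hb hab hθcont)
    (fun x hx => slopeExtend_strictAnti (hab x hx) (hanti x hx)) ?_
  rintro ⟨x, z⟩ ⟨hx, hz⟩
  obtain ⟨hmem, hinv⟩ := hγ x hx z hz
  exact ⟨hx, (slopeExtend_of_mem _ hmem).trans hinv⟩

/-- continuity of the fiberwise inverse of a continuous family of strictly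
decreasing bijections `θ_x : [a_x, b_x] → [c_x, d_x]` over an open set `V`, in an ordered
abelian group. -/
theorem stmt_4 {R : Type*} [AddCommGroup R] [LinearOrder R] [IsOrderedAddMonoid R]
    [TopologicalSpace R] [OrderTopology R] {n : ℕ}
    (V : Set (Fin n → R)) (hV : IsOpen V)
    (a b c d : (Fin n → R) → R)
    (ha : ContinuousOn a V) (hb : ContinuousOn b V)
    (hc : ContinuousOn c V) (hd : ContinuousOn d V)
    (hab : ∀ x ∈ V, a x ≤ b x)
    (θ γ : (Fin n → R) → R → R)
    (hbij : ∀ x ∈ V, Set.BijOn (θ x) (Set.Icc (a x) (b x)) (Set.Icc (c x) (d x)))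
    (hanti : ∀ x ∈ V, StrictAntiOn (θ x) (Set.Icc (a x) (b x)))
    (hθa : ∀ x ∈ V, θ x (a x) = d x) (hθb : ∀ x ∈ V, θ x (b x) = c x)
    (hθcont : ContinuousOn (fun p : (Fin n → R) × R => θ p.1 p.2)
      {p : (Fin n → R) × R | p.1 ∈ V ∧ p.2 ∈ Set.Icc (a p.1) (b p.1)})
    (hγ : ∀ x ∈ V, ∀ z ∈ Set.Icc (c x) (d x),
      γ x z ∈ Set.Icc (a x) (b x) ∧ θ x (γ x z) = z) :
    ContinuousOn (fun p : (Fin n → R) × R => γ p.1 p.2)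
      {p : (Fin n → R) × R | p.1 ∈ V ∧ p.2 ∈ Set.Icc (c p.1) (d p.1)} :=
  stmt_4_general V a b c d ha hb hab θ γ hanti hθcont hγ
end

section
/- Let R be an ordered vector space over an ordered division ring D. Every linear cell in R^n is convex (closed under rational convex combinations): for all x, y in the cell and q ∈ ℚ ∩ [0,1], qx + (1−q)y lies in the cell. -/
/-- An affine (linear) function `R^n → R` with coefficients in the division ring `D`:
`f(x) = λ₁ x₁ + ⋯ + λₙ xₙ + a`. -/
def IsAffine (D : Type*) {R : Type*} [DivisionRing D] [AddCommGroup R] [Module D R]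
    {n : ℕ} (f : (Fin n → R) → R) : Prop :=
  ∃ (l : Fin n → D) (a : R), ∀ x, f x = (∑ i, l i • x i) + a

/-- Linear cells in `R^n`, defined inductively: singletons and open intervals
(possibly unbounded) in `R`; graphs of affine functions and open cylinders between
affine functions (or `±∞`) over linear cells. -/
inductive IsLinearCell (D R : Type*) [DivisionRing D] [LinearOrder R]
    [AddCommGroup R] [Module D R] : ∀ n : ℕ, Set (Fin n → R) → Prop
  | singleton (a : R) : IsLinearCell D R 1 {x | x 0 = a}
  | ioo (a b : R) : IsLinearCell D R 1 {x | a < x 0 ∧ x 0 < b}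
  | ioi (a : R) : IsLinearCell D R 1 {x | a < x 0}
  | iio (b : R) : IsLinearCell D R 1 {x | x 0 < b}
  | univ1 : IsLinearCell D R 1 Set.univ
  | graph {n : ℕ} {X : Set (Fin n → R)} {f : (Fin n → R) → R} :
      IsLinearCell D R n X → IsAffine D f →
      IsLinearCell D R (n + 1)
        {x | Fin.init x ∈ X ∧ x (Fin.last n) = f (Fin.init x)}
  | cyl {n : ℕ} {X : Set (Fin n → R)} {f g : (Fin n → R) → R} :
      IsLinearCell D R n X → IsAffine D f → IsAffine D g → (∀ x ∈ X, f x < g x) →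
      IsLinearCell D R (n + 1)
        {x | Fin.init x ∈ X ∧ f (Fin.init x) < x (Fin.last n) ∧
          x (Fin.last n) < g (Fin.init x)}
  | cylTop {n : ℕ} {X : Set (Fin n → R)} {f : (Fin n → R) → R} :
      IsLinearCell D R n X → IsAffine D f →
      IsLinearCell D R (n + 1) {x | Fin.init x ∈ X ∧ f (Fin.init x) < x (Fin.last n)}
  | cylBot {n : ℕ} {X : Set (Fin n → R)} {g : (Fin n → R) → R} :
      IsLinearCell D R n X → IsAffine D g →
      IsLinearCell D R (n + 1) {x | Fin.init x ∈ X ∧ x (Fin.last n) < g (Fin.init x)}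
  | cylAll {n : ℕ} {X : Set (Fin n → R)} :
      IsLinearCell D R n X → IsLinearCell D R (n + 1) {x | Fin.init x ∈ X}

/-!
A linearly ordered ℚ-module is an ordered ℚ-module, and since the ℚ-action commutes with the
coefficients in `D`, every `D`-affine function is ℚ-affine. Hence each linear cell is an
intersection of preimages, under ℚ-affine maps, of a point or an open half-line, and such sets
are ℚ-convex.
-/

instance Rat.posSMulStrictMono {R : Type*} [AddCommGroup R] [LinearOrder R] [IsOrderedAddMonoid R]
    [Module ℚ R] : PosSMulStrictMono ℚ R where
  smul_lt_smul_of_pos_left q hq a b hab := by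
    rw [← sub_pos, ← smul_sub]
    have hden : q.den • (q • (b - a)) = q.num • (b - a) := by
      rw [← Nat.cast_smul_eq_nsmul ℚ, smul_smul, Rat.den_mul_eq_num, Int.cast_smul_eq_zsmul]
    exact (nsmul_pos_iff q.den_ne_zero).1 (hden ▸ zsmul_pos (sub_pos.2 hab) (Rat.num_pos.2 hq))

section Convex

variable {𝕜 E β : Type*} [Ring 𝕜] [PartialOrder 𝕜] [AddCommGroup E] [Module 𝕜 E]
  [AddCommGroup β] [Module 𝕜 β]

theorem convex_setOf_affineMap_eq (φ ψ : E →ᵃ[𝕜] β) : Convex 𝕜 {x | φ x = ψ x} := by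
  simpa only [Set.preimage, Set.mem_singleton_iff, AffineMap.coe_sub, Pi.sub_apply, sub_eq_zero]
    using (convex_singleton (0 : β)).affine_preimage (φ - ψ)

theorem convex_setOf_affineMap_lt [PartialOrder β] [IsOrderedAddMonoid β] [PosSMulStrictMono 𝕜 β]
    (φ ψ : E →ᵃ[𝕜] β) : Convex 𝕜 {x | φ x < ψ x} := by
  simpa only [Set.preimage, Set.mem_Ioi, AffineMap.coe_sub, Pi.sub_apply, sub_pos]
    using (convex_Ioi (0 : β)).affine_preimage (ψ - φ)

theorem Convex.setOf_init_mem {M : Type*} [AddCommGroup M] [Module 𝕜 M] {n : ℕ}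
    {X : Set (Fin n → M)} (hX : Convex 𝕜 X) : Convex 𝕜 {x : Fin (n + 1) → M | Fin.init x ∈ X} :=
  hX.linear_preimage (LinearMap.funLeft 𝕜 M Fin.castSucc)

end Convex

namespace IsAffine

variable {D R : Type*} [DivisionRing D] [AddCommGroup R] [Module D R] [Module ℚ R]
  [SMulCommClass ℚ D R] {n : ℕ} {f : (Fin n → R) → R}

theorem exists_affineMap_comp_init (hf : IsAffine D f) :
    ∃ φ : (Fin (n + 1) → R) →ᵃ[ℚ] R, ∀ x, φ x = f (Fin.init x) := by
  obtain ⟨l, a, hf⟩ := hf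
  refine ⟨((∑ i, l i • LinearMap.proj i).comp (LinearMap.funLeft ℚ R Fin.castSucc)).toAffineMap +
    AffineMap.const ℚ _ a, fun x => ?_⟩
  simp [hf, Fin.init]

theorem convex_setOf_last_eq (hf : IsAffine D f) :
    Convex ℚ {x : Fin (n + 1) → R | x (Fin.last n) = f (Fin.init x)} := by
  obtain ⟨φ, hφ⟩ := hf.exists_affineMap_comp_init
  simpa only [hφ, LinearMap.coe_toAffineMap, LinearMap.proj_apply] using
    convex_setOf_affineMap_eq (LinearMap.proj (Fin.last n)).toAffineMap φ

variable [LinearOrder R] [IsOrderedAddMonoid R]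

theorem convex_setOf_lt_last (hf : IsAffine D f) :
    Convex ℚ {x : Fin (n + 1) → R | f (Fin.init x) < x (Fin.last n)} := by
  obtain ⟨φ, hφ⟩ := hf.exists_affineMap_comp_init
  simpa only [hφ, LinearMap.coe_toAffineMap, LinearMap.proj_apply] using
    convex_setOf_affineMap_lt φ (LinearMap.proj (Fin.last n)).toAffineMap

theorem convex_setOf_last_lt (hf : IsAffine D f) :
    Convex ℚ {x : Fin (n + 1) → R | x (Fin.last n) < f (Fin.init x)} := by
  obtain ⟨φ, hφ⟩ := hf.exists_affineMap_comp_init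
  simpa only [hφ, LinearMap.coe_toAffineMap, LinearMap.proj_apply] using
    convex_setOf_affineMap_lt (LinearMap.proj (Fin.last n)).toAffineMap φ

end IsAffine

theorem IsLinearCell.convex {D R : Type*} [DivisionRing D] [AddCommGroup R] [LinearOrder R]
    [IsOrderedAddMonoid R] [Module D R] [Module ℚ R] [SMulCommClass ℚ D R] {n : ℕ}
    {C : Set (Fin n → R)} (hC : IsLinearCell D R n C) : Convex ℚ C := by
  have hx₀ : IsLinearMap ℚ fun x : Fin 1 → R => x 0 := (LinearMap.proj 0).isLinear
  induction hC with
  | singleton a => exact convex_hyperplane hx₀ a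
  | ioo a b => exact (convex_halfSpace_gt hx₀ a).inter (convex_halfSpace_lt hx₀ b)
  | ioi a => exact convex_halfSpace_gt hx₀ a
  | iio b => exact convex_halfSpace_lt hx₀ b
  | univ1 => exact convex_univ
  | graph _ hf hX => exact hX.setOf_init_mem.inter hf.convex_setOf_last_eq
  | cyl _ hf hg _ hX =>
    exact hX.setOf_init_mem.inter (hf.convex_setOf_lt_last.inter hg.convex_setOf_last_lt)
  | cylTop _ hf hX => exact hX.setOf_init_mem.inter hf.convex_setOf_lt_last
  | cylBot _ hg hX => exact hX.setOf_init_mem.inter hg.convex_setOf_last_lt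
  | cylAll _ hX => exact hX.setOf_init_mem

theorem stmt_6_general {D R : Type*} [DivisionRing D]
    [AddCommGroup R] [LinearOrder R] [IsOrderedAddMonoid R] [Module D R] [Module ℚ R] [SMulCommClass ℚ D R] :
    ∀ (n : ℕ) (C : Set (Fin n → R)), IsLinearCell D R n C →
      ∀ x ∈ C, ∀ y ∈ C, ∀ q : ℚ, 0 ≤ q → q ≤ 1 → q • x + (1 - q) • y ∈ C :=
  fun _ _ hC _ hx _ hy q hq₀ hq₁ => hC.convex hx hy hq₀ (sub_nonneg.2 hq₁) (add_sub_cancel q 1)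

/-- every linear cell in `R^n` is convex, i.e. closed under rational
convex combinations. -/
theorem stmt_6 {D R : Type*} [DivisionRing D] [LinearOrder D]
    [AddCommGroup R] [LinearOrder R] [IsOrderedAddMonoid R] [Module D R] [Module ℚ R] [SMulCommClass ℚ D R]
    (hpos : ∀ (d : D) (r : R), 0 < d → 0 < r → 0 < d • r) :
    ∀ (n : ℕ) (C : Set (Fin n → R)), IsLinearCell D R n C →
      ∀ x ∈ C, ∀ y ∈ C, ∀ q : ℚ, 0 ≤ q → q ≤ 1 → q • x + (1 - q) • y ∈ C :=
  stmt_6_general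
end

section
/- Let R be an ordered vector space over an ordered division ring D, let A ⊆ R^n be a linear cell, and let p : R^n → R be a linear (affine) function with p ≥ 0 on A and p not identically 0 on A. Then p > 0 on A. -/
/-!
If an affine `p ≥ 0` on a cell `A` vanishes at some `x₀ ∈ A`, it vanishes on all of `A`; this is
proved by induction on the cell. Over a graph, `p` restricts to an affine function of the base.
Over an open cylinder, the fibre through `x₀` contains `t₀ ± s` for some `s ≠ 0`, and `p ≥ 0` at
both points forces the last coefficient of `p` and its value at the base point of `x₀` to vanish;
so `p` is the pull-back of an affine function that is nonnegative on the base and vanishes at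
that point. Finding `s` needs midpoints in `R`, which exist because `2` is invertible in `D`.
-/

open Set

theorem denselyOrdered_of_module (D : Type*) {R : Type*} [DivisionRing D] [AddCommGroup R]
    [LinearOrder R] [IsOrderedAddMonoid R] [Module D R] [Nontrivial R] : DenselyOrdered R := by
  obtain ⟨e, he⟩ := exists_zero_lt (α := R)
  have h2 : (2 : D) ≠ 0 := fun h2 => by
    have : e + e = 0 := by rw [← two_smul D e, h2, zero_smul]
    exact (add_pos he he).ne' this
  refine ⟨fun a b hab => ?_⟩
  set h := (2 : D)⁻¹ • (b - a)
  have hb : b = a + h + h := by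
    rw [add_assoc, ← two_smul D h, smul_smul, mul_inv_cancel₀ h2, one_smul, add_sub_cancel]
  have hpos : 0 < h := by
    by_contra! hh
    exact (add_nonpos hh hh).not_gt (by rwa [hb, add_assoc, lt_add_iff_pos_right] at hab)
  exact ⟨a + h, lt_add_of_pos_right a hpos, hb ▸ lt_add_of_pos_right _ hpos⟩

section

variable {D R : Type*} [DivisionRing D] [AddCommGroup R] [Module D R]

namespace IsAffine

theorem exists_init_add_smul_last {n : ℕ} {p : (Fin (n + 1) → R) → R} (hp : IsAffine D p) :
    ∃ (q : (Fin n → R) → R) (l : D), IsAffine D q ∧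
      ∀ x, p x = q (Fin.init x) + l • x (Fin.last n) := by
  obtain ⟨lam, a, hp⟩ := hp
  refine ⟨fun z => (∑ i, lam i.castSucc • z i) + a, lam (Fin.last n),
    ⟨fun i => lam i.castSucc, a, fun z => rfl⟩, fun x => ?_⟩
  rw [hp, Fin.sum_univ_castSucc]
  simp only [Fin.init]
  abel

theorem add_smul {n : ℕ} {q f : (Fin n → R) → R} (hq : IsAffine D q) (hf : IsAffine D f)
    (l : D) : IsAffine D (fun z => q z + l • f z) := by
  obtain ⟨lq, aq, hq⟩ := hq
  obtain ⟨lf, af, hf⟩ := hf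
  refine ⟨fun i => lq i + l * lf i, aq + l • af, fun z => ?_⟩
  simp only [hq, hf, smul_add, Finset.smul_sum, _root_.add_smul, mul_smul, Finset.sum_add_distrib]
  abel

end IsAffine

variable [LinearOrder R]

variable (D) in
def IsAffineRigid {n : ℕ} (A : Set (Fin n → R)) : Prop :=
  ∀ p, IsAffine D p → (∀ x ∈ A, 0 ≤ p x) → ∀ x₀ ∈ A, p x₀ = 0 → ∀ y ∈ A, p y = 0

namespace IsAffineRigid

variable {n : ℕ} {X : Set (Fin n → R)}

theorem of_subsingleton (hX : X.Subsingleton) : IsAffineRigid D X :=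
  fun _ _ _ _ hx₀ h0 _ hy => hX hy hx₀ ▸ h0

theorem graph (hX : IsAffineRigid D X) {f : (Fin n → R) → R} (hf : IsAffine D f) :
    IsAffineRigid D {x | Fin.init x ∈ X ∧ x (Fin.last n) = f (Fin.init x)} := by
  rintro p hp hnn x₀ ⟨hz₀, hx₀⟩ h0 y ⟨hy, hyf⟩
  obtain ⟨q, l, hq, hpq⟩ := hp.exists_init_add_smul_last
  have hnn_base : ∀ z ∈ X, 0 ≤ q z + l • f z := fun z hz => by
    simpa [hpq] using hnn (Fin.snoc z (f z)) (by simpa using hz)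
  rw [hpq, hx₀] at h0
  rw [hpq, hyf]
  exact hX _ (hq.add_smul hf l) hnn_base _ hz₀ h0 _ hy

end IsAffineRigid

variable [IsOrderedAddMonoid R]

def IsLocallySymmetric (S : Set R) : Prop :=
  ∀ t ∈ S, ∃ s ≠ 0, t + s ∈ S ∧ t - s ∈ S

section LocallySymmetric

variable [DenselyOrdered R]

theorem IsLocallySymmetric.of_Ioo_subset {S : Set R}
    (hS : ∀ t ∈ S, ∃ a b, t ∈ Ioo a b ∧ Ioo a b ⊆ S) : IsLocallySymmetric S := by
  intro t htS
  obtain ⟨a, b, ht, hab⟩ := hS t htS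
  obtain ⟨s, hs, hsab⟩ := exists_between (lt_min (sub_pos.2 ht.1) (sub_pos.2 ht.2))
  rw [lt_min_iff] at hsab
  exact ⟨s, hs.ne', hab ⟨ht.1.trans (lt_add_of_pos_right t hs), lt_sub_iff_add_lt'.1 hsab.2⟩,
    hab ⟨lt_sub_comm.1 hsab.1, (sub_lt_self t hs).trans ht.2⟩⟩

theorem isLocallySymmetric_Ioo (a b : R) : IsLocallySymmetric (Ioo a b) :=
  .of_Ioo_subset fun _ ht => ⟨a, b, ht, subset_rfl⟩

variable [Nontrivial R]

theorem isLocallySymmetric_Ioi (a : R) : IsLocallySymmetric (Ioi a) :=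
  .of_Ioo_subset fun t ht =>
    let ⟨b, hb⟩ := exists_gt t
    ⟨a, b, ⟨ht, hb⟩, Ioo_subset_Ioi_self⟩

theorem isLocallySymmetric_Iio (b : R) : IsLocallySymmetric (Iio b) :=
  .of_Ioo_subset fun t ht =>
    let ⟨a, ha⟩ := exists_lt t
    ⟨a, b, ⟨ha, ht⟩, Ioo_subset_Iio_self⟩

theorem isLocallySymmetric_univ : IsLocallySymmetric (univ : Set R) :=
  .of_Ioo_subset fun t _ =>
    let ⟨a, ha⟩ := exists_lt t
    let ⟨b, hb⟩ := exists_gt t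
    ⟨a, b, ⟨ha, hb⟩, subset_univ _⟩

end LocallySymmetric

theorem eq_zero_of_nonneg_add_sub {l : D} {c t s : R} (hs : s ≠ 0) (h0 : c + l • t = 0)
    (hadd : 0 ≤ c + l • (t + s)) (hsub : 0 ≤ c + l • (t - s)) : l = 0 ∧ c = 0 := by
  rw [smul_add, ← add_assoc, h0, zero_add] at hadd
  rw [smul_sub, ← add_sub_assoc, h0, zero_sub, neg_nonneg] at hsub
  obtain rfl : l = 0 := (smul_eq_zero.1 (le_antisymm hsub hadd)).resolve_right hs
  simpa using h0

namespace IsAffineRigid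

variable {n : ℕ} {X : Set (Fin n → R)}

theorem fibred (hX : IsAffineRigid D X) {I : (Fin n → R) → Set R}
    (hne : ∀ z ∈ X, (I z).Nonempty) (hsymm : ∀ z ∈ X, IsLocallySymmetric (I z)) :
    IsAffineRigid D {x | Fin.init x ∈ X ∧ x (Fin.last n) ∈ I (Fin.init x)} := by
  rintro p hp hnn x₀ ⟨hz₀, ht₀⟩ h0 y ⟨hy, -⟩
  obtain ⟨q, l, hq, hpq⟩ := hp.exists_init_add_smul_last
  have hfibre : ∀ z ∈ X, ∀ t ∈ I z, 0 ≤ q z + l • t := fun z hz t ht => by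
    simpa [hpq] using hnn (Fin.snoc z t) (by simpa using ⟨hz, ht⟩)
  obtain ⟨s, hs, hadd, hsub⟩ := hsymm _ hz₀ _ ht₀
  rw [hpq] at h0
  obtain ⟨rfl, hq₀⟩ := eq_zero_of_nonneg_add_sub hs h0 (hfibre _ hz₀ _ hadd)
    (hfibre _ hz₀ _ hsub)
  have hqnn : ∀ z ∈ X, 0 ≤ q z := fun z hz => by
    obtain ⟨t, ht⟩ := hne z hz
    simpa using hfibre z hz t ht
  simpa [hpq] using hX q hq hqnn _ hz₀ hq₀ _ hy

theorem fin_one {S : Set R} (hS : IsLocallySymmetric S) :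
    IsAffineRigid D {x : Fin 1 → R | x 0 ∈ S} := by
  rcases S.eq_empty_or_nonempty with rfl | hne
  · exact of_subsingleton (by simp)
  have hbase : IsAffineRigid D (univ : Set (Fin 0 → R)) :=
    of_subsingleton subsingleton_of_subsingleton
  simpa using hbase.fibred (I := fun _ => S) (fun _ _ => hne) (fun _ _ => hS)

end IsAffineRigid

theorem IsLinearCell.isAffineRigid [DenselyOrdered R] [Nontrivial R] {n : ℕ}
    {A : Set (Fin n → R)} (hA : IsLinearCell D R n A) : IsAffineRigid D A := by
  induction hA with
  | singleton a =>
    exact .of_subsingleton fun x hx y hy =>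
      funext fun i => Fin.fin_one_eq_zero i ▸ hx.trans hy.symm
  | ioo a b => exact .fin_one (isLocallySymmetric_Ioo a b)
  | ioi a => exact .fin_one (isLocallySymmetric_Ioi a)
  | iio b => exact .fin_one (isLocallySymmetric_Iio b)
  | univ1 => exact .fin_one isLocallySymmetric_univ
  | graph _ hf ih => exact ih.graph hf
  | cyl _ _ _ hfg ih =>
    exact ih.fibred (fun z hz => nonempty_Ioo.2 (hfg z hz)) fun _ _ => isLocallySymmetric_Ioo _ _
  | cylTop _ _ ih =>
    exact ih.fibred (fun _ _ => nonempty_Ioi) fun _ _ => isLocallySymmetric_Ioi _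
  | cylBot _ _ ih =>
    exact ih.fibred (fun _ _ => nonempty_Iio) fun _ _ => isLocallySymmetric_Iio _
  | cylAll _ ih =>
    simpa using ih.fibred (fun _ _ => univ_nonempty) fun _ _ => isLocallySymmetric_univ

end

theorem stmt_8_general {D R : Type*} [DivisionRing D]
    [AddCommGroup R] [LinearOrder R] [IsOrderedAddMonoid R] [Module D R]
    {n : ℕ} (A : Set (Fin n → R)) (hA : IsLinearCell D R n A)
    (p : (Fin n → R) → R) (hp : IsAffine D p)
    (hnonneg : ∀ x ∈ A, 0 ≤ p x) (hne : ∃ x ∈ A, p x ≠ 0) :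
    ∀ x ∈ A, 0 < p x := by
  obtain ⟨x₁, hx₁, hpx₁⟩ := hne
  have : Nontrivial R := ⟨⟨p x₁, 0, hpx₁⟩⟩
  have : DenselyOrdered R := denselyOrdered_of_module D
  intro y hy
  refine (hnonneg y hy).lt_of_ne fun hy0 => hpx₁ ?_
  exact hA.isAffineRigid p hp hnonneg y hy hy0.symm x₁ hx₁

/-- an affine function `p` which is nonnegative and not identically zero
on a linear cell `A` is strictly positive on `A`. -/
theorem stmt_8 {D R : Type*} [DivisionRing D] [LinearOrder D]
    [AddCommGroup R] [LinearOrder R] [IsOrderedAddMonoid R] [Module D R]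
    (hpos : ∀ (d : D) (r : R), 0 < d → 0 < r → 0 < d • r)
    {n : ℕ} (A : Set (Fin n → R)) (hA : IsLinearCell D R n A)
    (p : (Fin n → R) → R) (hp : IsAffine D p)
    (hnonneg : ∀ x ∈ A, 0 ≤ p x) (hne : ∃ x ∈ A, p x ≠ 0) :
    ∀ x ∈ A, 0 < p x :=
  stmt_8_general A hA p hp hnonneg hne
end

section
/- Let 𝒞 be a finite partition of a topological space S such that for all D, E ∈ 𝒞, if D ∩ cl(E) ≠ ∅ then D ⊆ cl(E) (i.e., 𝒞 is a stratification). Then for any subset X ⊆ S, the star st_𝒞(X) = ⋃{D ∈ 𝒞 : X ∩ cl(D) ≠ ∅} is an open subset of S. -/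
/-- if `𝒞` is a finite partition of a topological space satisfying the
stratification (frontier) condition, then for any `X` the star
`st_𝒞(X) = ⋃{D ∈ 𝒞 : X ∩ cl(D) ≠ ∅}` is open. -/
theorem stmt_13 {S : Type*} [TopologicalSpace S]
    (𝒞 : Set (Set S)) (hfin : 𝒞.Finite)
    (hcover : ⋃₀ 𝒞 = Set.univ)
    (hdisj : ∀ A ∈ 𝒞, ∀ B ∈ 𝒞, A = B ∨ Disjoint A B)
    (hstrat : ∀ D ∈ 𝒞, ∀ E ∈ 𝒞, (D ∩ closure E).Nonempty → D ⊆ closure E)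
    (X : Set S) :
    IsOpen (⋃₀ {D ∈ 𝒞 | (X ∩ closure D).Nonempty}) := by
  set good : Set (Set S) := {D ∈ 𝒞 | (X ∩ closure D).Nonempty} with hgood
  set bad : Set (Set S) := {D ∈ 𝒞 | ¬ (X ∩ closure D).Nonempty} with hbad
  -- complement of the star is the union of the bad strata
  have hcompl : (⋃₀ good)ᶜ = ⋃₀ bad := by
    apply Set.eq_of_subset_of_subset
    · intro x hx
      have hxuniv : x ∈ ⋃₀ 𝒞 := by rw [hcover]; trivial
      obtain ⟨D, hD, hxD⟩ := hxuniv
      by_cases hD' : (X ∩ closure D).Nonempty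
      · exact absurd ⟨D, ⟨hD, hD'⟩, hxD⟩ hx
      · exact ⟨D, ⟨hD, hD'⟩, hxD⟩
    · rintro x ⟨E, ⟨hE, hEbad⟩, hxE⟩ ⟨D, ⟨hD, hDgood⟩, hxD⟩
      rcases hdisj D hD E hE with rfl | hdisj'
      · exact hEbad hDgood
      · exact (Set.disjoint_left.mp hdisj' hxD) hxE
  rw [← isClosed_compl_iff, hcompl]
  -- the union of the bad strata is closed
  have hbadfin : bad.Finite := hfin.subset (fun D hD => hD.1)
  rw [Set.sUnion_eq_biUnion]
  apply isClosed_of_closure_subset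
  rw [hbadfin.closure_biUnion]
  rintro x hx
  simp only [Set.mem_iUnion] at hx
  obtain ⟨E, ⟨hE, hEbad⟩, hxE⟩ := hx
  have hxuniv : x ∈ ⋃₀ 𝒞 := by rw [hcover]; trivial
  obtain ⟨D, hD, hxD⟩ := hxuniv
  have hDbad : ¬ (X ∩ closure D).Nonempty := by
    intro hDgood
    have hsub : D ⊆ closure E := hstrat D hD E hE ⟨x, hxD, hxE⟩
    have : closure D ⊆ closure E := closure_minimal hsub isClosed_closure
    exact hEbad (hDgood.mono (Set.inter_subset_inter_right X this))
  exact Set.mem_biUnion ⟨hD, hDbad⟩ hxD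
end
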